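/- Suppose M ≥ 2 and i ∈ B⁺. Then the Shapley value of i under u admits the closed form φ_i = H_M/M − (M⁺ − 1)(H_M − 1)/(M(M − 1)). -/

import Mathlib

/-!
Since `u S` depends only on `S ∩ B`, every player outside `B` is null, and null players can be
removed one at a time because the Shapley weights satisfy `w_{n+1}(s) + w_{n+1}(s+1) = w_n(s)`.
In the game on `B`, the marginal contribution of `i` to a coalition `T ⊆ B \ {i}` with `|T| = t`
and `p` agreeing members is `1/(t+1) - p/(t(t+1))`, which is affine in `p`. Summed over the
`t`-subsets, `p` has total `|B⁺ \ {i}| · C(M-2, t-1)` by double counting, and each size class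
carries total weight `1/M`; so size `t ≥ 1` contributes `(1/M - (M⁺-1)/(M(M-1)))/(t+1)` and size
`0` contributes `1/M`, which sums to the harmonic closed form.
-/

open Finset

/-- Bucket-vote utility: `u(S) = |S ∩ B⁺| / |S ∩ B|` if `S ∩ B ≠ ∅`, else `0`. -/
noncomputable def u {α : Type*} [DecidableEq α] (B Bp : Finset α) (S : Finset α) : ℝ :=
  if (S ∩ B).Nonempty then ((S ∩ Bp).card : ℝ) / ((S ∩ B).card : ℝ) else 0

/-- Shapley value of player `i` in the game on `N` with utility `u B Bp`. -/
noncomputable def shapley {α : Type*} [DecidableEq α] (N B Bp : Finset α) (i : α) : ℝ :=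
  ∑ S ∈ (N.erase i).powerset,
    ((S.card.factorial * (N.card - S.card - 1).factorial : ℝ) / (N.card.factorial : ℝ))
      * (u B Bp (insert i S) - u B Bp S)

/-- The `m`-th harmonic number `H m = ∑_{j=1}^m 1/j` (with `H 0 = 0`). -/
noncomputable def H (m : ℕ) : ℝ := ∑ j ∈ Finset.range m, (1 : ℝ) / (j + 1)

open scoped Nat

noncomputable def shapleyWeight (n s : ℕ) : ℝ := (s ! * (n - s - 1)! : ℝ) / n !

lemma shapleyWeight_add_succ {n s : ℕ} (h : s < n) :
    shapleyWeight (n + 1) s + shapleyWeight (n + 1) (s + 1) = shapleyWeight n s := by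
  obtain ⟨k, rfl⟩ := Nat.exists_eq_add_of_lt h
  simp only [shapleyWeight, show s + k + 1 + 1 - s - 1 = k + 1 by omega,
    show s + k + 1 + 1 - (s + 1) - 1 = k by omega, show s + k + 1 - s - 1 = k by omega,
    Nat.factorial_succ]
  push_cast
  field_simp
  ring

lemma shapleyWeight_mul_choose {n s : ℕ} (h : s < n) :
    shapleyWeight n s * (n - 1).choose s = 1 / n := by
  obtain ⟨k, rfl⟩ := Nat.exists_eq_add_of_lt h
  have hfac : ((s + k).choose k * s ! * k ! : ℝ) = (s + k)! := by
    exact_mod_cast Nat.add_choose_mul_factorial_mul_factorial s k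
  rw [← Nat.choose_symm_add] at hfac
  simp only [shapleyWeight, show s + k + 1 - s - 1 = k by omega, Nat.add_sub_cancel,
    Nat.factorial_succ]
  push_cast
  field_simp
  linear_combination hfac

lemma shapleyWeight_succ_mul_choose {n s : ℕ} (h : s + 1 < n) :
    shapleyWeight n (s + 1) * (n - 2).choose s = (s + 1) / (n * (n - 1)) := by
  obtain ⟨k, rfl⟩ : ∃ k, n = s + k + 2 := ⟨n - s - 2, by omega⟩
  have hfac : ((s + k).choose s * s ! * k ! : ℝ) = (s + k)! := by
    rw [Nat.choose_symm_add]
    exact_mod_cast Nat.add_choose_mul_factorial_mul_factorial s k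
  simp only [shapleyWeight, show s + k + 2 - (s + 1) - 1 = k by omega,
    show s + k + 2 - 2 = s + k by omega, show s + k + 2 = s + k + 1 + 1 by omega,
    Nat.factorial_succ]
  push_cast
  rw [add_sub_cancel_right]
  field_simp
  linear_combination hfac

lemma shapleyWeight_succ_mul_sub {m s : ℕ} (hs : s ≤ m) (k : ℝ) :
    shapleyWeight (m + 2) (s + 1) *
        ((m + 1).choose (s + 1) / ((s : ℝ) + 1 + 1) - k * m.choose s / ((s + 1) * (s + 1 + 1))) =
      (1 / (m + 2) - k / ((m + 2) * (m + 1))) * (1 / (s + 2)) := by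
  have h1 := shapleyWeight_mul_choose (n := m + 2) (s := s + 1) (by omega)
  have h2 := shapleyWeight_succ_mul_choose (n := m + 2) (s := s) (by omega)
  simp only [show m + 2 - 1 = m + 1 by omega, Nat.add_sub_cancel, Nat.cast_add, Nat.cast_ofNat,
    show (m : ℝ) + 2 - 1 = m + 1 by ring]
    at h1 h2
  rw [mul_sub, mul_div_assoc', h1, mul_div_assoc', mul_left_comm, h2]
  field_simp
  ring

section Shapley

variable {α : Type*} [DecidableEq α]

noncomputable def shapleyValue (N : Finset α) (v : Finset α → ℝ) (i : α) : ℝ :=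
  ∑ S ∈ (N.erase i).powerset, shapleyWeight #N #S * (v (insert i S) - v S)

lemma shapley_eq_shapleyValue (N B Bp : Finset α) (i : α) :
    shapley N B Bp i = shapleyValue N (u B Bp) i := rfl

lemma shapleyValue_insert_of_null {N : Finset α} {v : Finset α → ℝ} {i j : α}
    (hi : i ∈ N) (hj : j ∉ N) (hnull : ∀ S, v (insert j S) = v S) :
    shapleyValue (insert j N) v i = shapleyValue N v i := by
  have hji : j ≠ i := fun h => hj (h ▸ hi)
  have hjNi : j ∉ N.erase i := fun h => hj (mem_of_mem_erase h)
  rw [shapleyValue, shapleyValue, erase_insert_of_ne hji, sum_powerset_insert hjNi,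
    ← sum_add_distrib, card_insert_of_notMem hj]
  refine sum_congr rfl fun S hS => ?_
  have hSn : #S < #N := by
    have := card_le_card (mem_powerset.1 hS)
    rw [card_erase_of_mem hi] at this
    have := card_pos.2 ⟨i, hi⟩
    omega
  rw [insert_comm, hnull, hnull, card_insert_of_notMem fun h => hjNi (mem_powerset.1 hS h),
    ← shapleyWeight_add_succ hSn]
  ring

lemma shapleyValue_union_of_null {B C : Finset α} {v : Finset α → ℝ} {i : α}
    (hi : i ∈ B) (hBC : Disjoint B C) (hnull : ∀ j ∈ C, ∀ S, v (insert j S) = v S) :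
    shapleyValue (B ∪ C) v i = shapleyValue B v i := by
  induction C using Finset.induction_on with
  | empty => rw [union_empty]
  | insert j C hjC ih =>
    rw [disjoint_insert_right] at hBC
    rw [union_insert, shapleyValue_insert_of_null (mem_union_left C hi)
      (by simp [hBC.1, hjC]) (hnull j (mem_insert_self j C)),
      ih hBC.2 fun k hk => hnull k (mem_insert_of_mem hk)]

lemma shapleyValue_eq_of_inter {B N : Finset α} {v : Finset α → ℝ} {i : α}
    (hi : i ∈ B) (hBN : B ⊆ N) (hv : ∀ S, v S = v (S ∩ B)) :
    shapleyValue N v i = shapleyValue B v i := by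
  rw [← union_sdiff_of_subset hBN]
  refine shapleyValue_union_of_null hi disjoint_sdiff fun j hj S => ?_
  rw [hv, insert_inter_of_notMem (mem_sdiff.1 hj).2, ← hv]

end Shapley

lemma H_succ (m : ℕ) : H (m + 1) = 1 + ∑ s ∈ range m, 1 / ((s : ℝ) + 2) := by
  rw [H, sum_range_succ', add_comm]
  push_cast
  norm_num [add_assoc]

lemma sum_card_inter_powersetCard_succ {α : Type*} [DecidableEq α] (X A : Finset α) (t : ℕ) :
    ∑ T ∈ X.powersetCard (t + 1), #(T ∩ A) = #(X ∩ A) * (#X - 1).choose t := by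
  calc ∑ T ∈ X.powersetCard (t + 1), #(T ∩ A)
      = ∑ T ∈ X.powersetCard (t + 1), ∑ a ∈ X ∩ A, if {a} ⊆ T then 1 else 0 := by
        refine sum_congr rfl fun T hT => ?_
        rw [← card_filter]
        congr 1
        ext a
        have := (mem_powersetCard.1 hT).1
        simp only [mem_inter, mem_filter, singleton_subset_iff]
        constructor
        · rintro ⟨haT, haA⟩
          exact ⟨⟨this haT, haA⟩, haT⟩
        · rintro ⟨⟨-, haA⟩, haT⟩
          exact ⟨haT, haA⟩
    _ = ∑ a ∈ X ∩ A, #((X.powersetCard (t + 1)).filter ({a} ⊆ ·)) := by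
        rw [sum_comm]
        simp only [card_filter]
    _ = #(X ∩ A) * (#X - 1).choose t := by
        rw [sum_congr rfl fun a ha => card_filter_powersetCard_subset {a} X (t + 1)
          (singleton_subset_iff.2 (mem_inter.1 ha).1) (by simp)]
        simp

section Bucket

variable {α : Type*} [DecidableEq α] {B Bp : Finset α} {i : α}

lemma u_eq_u_inter (hBp : Bp ⊆ B) (S : Finset α) : u B Bp S = u B Bp (S ∩ B) := by
  rw [u, u, inter_assoc, inter_self, inter_assoc, inter_eq_right.2 hBp]

lemma u_of_subset {T : Finset α} (hT : T ⊆ B) : u B Bp T = #(T ∩ Bp) / #T := by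
  rw [u, inter_eq_left.2 hT]
  split_ifs with hne
  · rfl
  · simp [not_nonempty_iff_eq_empty.1 hne]

lemma u_insert_sub (hBp : Bp ⊆ B) (hi : i ∈ Bp) {T : Finset α} (hT : T ⊆ B) (hiT : i ∉ T) :
    u B Bp (insert i T) - u B Bp T = 1 / (#T + 1) - #(T ∩ Bp) / (#T * (#T + 1)) := by
  rw [u_of_subset (insert_subset (hBp hi) hT), u_of_subset hT, insert_inter_of_mem hi,
    card_insert_of_notMem hiT, card_insert_of_notMem fun h => hiT (mem_inter.1 h).1]
  rcases T.eq_empty_or_nonempty with rfl | hne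
  · simp
  · have : (#T : ℝ) ≠ 0 := by exact_mod_cast hne.card_pos.ne'
    push_cast
    field_simp
    ring

lemma shapleyValue_u_eq_sum_range (hBp : Bp ⊆ B) (hi : i ∈ Bp) :
    shapleyValue B (u B Bp) i = ∑ t ∈ range #B, shapleyWeight #B t *
      (((#B - 1).choose t : ℝ) / (t + 1) -
        ((∑ T ∈ (B.erase i).powersetCard t, #(T ∩ Bp) : ℕ) : ℝ) / (t * (t + 1))) := by
  have hiB := hBp hi
  rw [shapleyValue, sum_powerset, card_erase_of_mem hiB,
    Nat.sub_add_cancel (card_pos.2 ⟨i, hiB⟩)]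
  refine sum_congr rfl fun t _ => ?_
  have hterm : ∀ T ∈ (B.erase i).powersetCard t,
      shapleyWeight #B #T * (u B Bp (insert i T) - u B Bp T) =
        shapleyWeight #B t * (1 / (t + 1) - #(T ∩ Bp) / (t * (t + 1))) := by
    intro T hT
    obtain ⟨hTB, rfl⟩ := mem_powersetCard.1 hT
    rw [u_insert_sub hBp hi (hTB.trans (erase_subset i B)) fun h => (mem_erase.1 (hTB h)).1 rfl]
  rw [sum_congr rfl hterm, ← mul_sum, sum_sub_distrib, sum_const, card_powersetCard,
    card_erase_of_mem hiB, ← sum_div, nsmul_eq_mul, Nat.cast_sum]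
  ring

theorem shapleyValue_u_self (hBp : Bp ⊆ B) (hi : i ∈ Bp) (hM : 2 ≤ #B) :
    shapleyValue B (u B Bp) i =
      H #B / #B - (#Bp - 1 : ℝ) * (H #B - 1) / (#B * (#B - 1)) := by
  obtain ⟨m, hm⟩ : ∃ m, #B = m + 2 := ⟨#B - 2, by omega⟩
  have hAp : #((B.erase i) ∩ Bp) = #Bp - 1 := by
    rw [erase_inter, inter_eq_right.2 hBp, card_erase_of_mem hi]
  have hterm : ∀ s ∈ range (m + 1), shapleyWeight (m + 2) (s + 1) *
      (((m + 2 - 1).choose (s + 1) : ℝ) / ((s + 1 : ℕ) + 1) -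
        ((∑ T ∈ (B.erase i).powersetCard (s + 1), #(T ∩ Bp) : ℕ) : ℝ) /
          ((s + 1 : ℕ) * ((s + 1 : ℕ) + 1))) =
      (1 / (m + 2) - (#Bp - 1 : ℝ) / ((m + 2) * (m + 1))) * (1 / (s + 2)) := by
    intro s hs
    rw [sum_card_inter_powersetCard_succ, hAp, card_erase_of_mem (hBp hi), Nat.sub_sub, hm,
      Nat.cast_mul, Nat.cast_sub (card_pos.2 ⟨i, hi⟩)]
    push_cast
    exact shapleyWeight_succ_mul_sub (Nat.lt_succ_iff.1 (mem_range.1 hs)) _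
  have hzero : shapleyWeight (m + 2) 0 = 1 / (m + 2) := by
    simpa using shapleyWeight_mul_choose (n := m + 2) (s := 0) (by omega)
  -- the `t = 0` summand reduces to `shapleyWeight (m + 2) 0` because `x / 0 = 0`
  rw [shapleyValue_u_eq_sum_range hBp hi, hm, sum_range_succ', sum_congr rfl hterm, ← mul_sum,
    show H (m + 2) = H (m + 1 + 1) from rfl, H_succ]
  simp only [Nat.cast_zero, zero_mul, div_zero, sub_zero, Nat.choose_zero_right, hzero]
  push_cast
  rw [show (m : ℝ) + 2 - 1 = m + 1 by ring]
  field_simp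
  ring

end Bucket

/-- Closed form of the Shapley value for a correct-label bucket member (`M ≥ 2`):
`φ_i = H_M/M − (M⁺ − 1)(H_M − 1)/(M(M − 1))`. -/
theorem stmt5 {α : Type*} [DecidableEq α] (N B Bp : Finset α)
    (hBpB : Bp ⊆ B) (hBN : B ⊆ N) (hM : 2 ≤ B.card)
    (i : α) (hi : i ∈ Bp) :
    shapley N B Bp i =
      H B.card / (B.card : ℝ) -
        ((Bp.card : ℝ) - 1) * (H B.card - 1) / ((B.card : ℝ) * ((B.card : ℝ) - 1)) := by
  rw [shapley_eq_shapleyValue, shapleyValue_eq_of_inter (hBpB hi) hBN (u_eq_u_inter hBpB),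
    shapleyValue_u_self hBpB hi hM]
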